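/- arXiv:0904.1519 — 5 statements merged into one kernel-verified Lean document; each statement's English description precedes it below -/
import Mathlib

section
/- Let K be a field with char K ∉ {2,3} and let e, f ∈ K satisfy e ≠ 0, f ≠ 0 and e² ≠ 4f. Then the Weierstrass curve E_{e,f}: y² = x(x² + (e²−2f)x + f²) over K has nonzero discriminant (so is an elliptic curve), the point Q = (f, ef) lies on E_{e,f}, its double satisfies 2Q = (0,0), and Q has exact order 4 in the group E_{e,f}(K). -/
/-!
On `y² = x(x² + ax + b)` we have `negY x y = -y`, so `(0,0)` is `2`-torsion. On `E_{e,f}` the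
tangent at `Q = (f, ef)` has slope `(3f² + 2(e² - 2f)f + f²) / (2ef) = e`, so it is the line
`y = ex`, which meets the curve where `x(x - f)² = 0`; its third intersection is `(0,0)`, which
is its own inverse. Hence `2Q = (0,0) ≠ 0` and `4Q = 0`.
-/

open WeierstrassCurve

/-- The Weierstrass curve `y² = x(x² + ax + b)`, i.e. `a₁ = a₃ = a₆ = 0`, `a₂ = a`,
`a₄ = b`. -/
def Wab {K : Type*} [Field K] (a b : K) : WeierstrassCurve K :=
  { a₁ := 0, a₂ := a, a₃ := 0, a₄ := b, a₆ := 0 }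

theorem addOrderOf_eq_four_of_two_nsmul {G : Type*} [AddMonoid G] {P T : G}
    (hP : 2 • P = T) (hT : T ≠ 0) (hT₂ : 2 • T = 0) : addOrderOf P = 4 :=
  addOrderOf_eq_prime_pow (p := 2) (n := 1) (by simpa [hP] using hT)
    (by rwa [pow_succ, pow_one, mul_nsmul, hP])

namespace Wab

variable {K : Type*} [Field K]

theorem Δ_eq (a b : K) : (Wab a b).Δ = 16 * b ^ 2 * (a ^ 2 - 4 * b) := by
  simp only [Wab, WeierstrassCurve.Δ, b₂, b₄, b₆, b₈]
  ring

theorem Δ_ne_zero {a b : K} (h2 : (2 : K) ≠ 0) (hb : b ≠ 0) (hab : a ^ 2 ≠ 4 * b) :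
    (Wab a b).Δ ≠ 0 := by
  have h16 : (16 : K) = 2 ^ 4 := by norm_num
  rw [Δ_eq, h16]
  exact mul_ne_zero (mul_ne_zero (pow_ne_zero 4 h2) (pow_ne_zero 2 hb)) (sub_ne_zero.mpr hab)

theorem equation_iff (a b x y : K) :
    (Wab a b).toAffine.Equation x y ↔ y ^ 2 = x * (x ^ 2 + a * x + b) := by
  rw [Affine.equation_iff]
  simp only [Wab]
  constructor <;> intro h <;> linear_combination h

theorem negY_eq (a b x y : K) : (Wab a b).toAffine.negY x y = -y := by
  simp [Wab, Affine.negY]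

theorem two_nsmul_some_zero_zero [DecidableEq K] {a b : K}
    (h0 : (Wab a b).toAffine.Nonsingular 0 0) : 2 • Affine.Point.some _ _ h0 = 0 := by
  rw [two_nsmul]
  exact Affine.Point.add_self_of_Y_eq (by rw [negY_eq, neg_zero])

theorem Y_ne_negY {a b x y : K} (hy : 2 * y ≠ 0) : y ≠ (Wab a b).toAffine.negY x y := by
  rw [negY_eq]
  contrapose! hy
  linear_combination hy

theorem slope_self [DecidableEq K] (a b x y : K) (hy : 2 * y ≠ 0) :
    (Wab a b).toAffine.slope x x y y = (3 * x ^ 2 + 2 * a * x + b) / (2 * y) := by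
  rw [Affine.slope_of_Y_ne rfl (Y_ne_negY hy), negY_eq]
  simp only [Wab]
  ring

theorem addX_eq (a b x₁ x₂ ℓ : K) : (Wab a b).toAffine.addX x₁ x₂ ℓ = ℓ ^ 2 - a - x₁ - x₂ := by
  simp only [Affine.addX, Wab]
  ring

theorem addY_eq (a b x₁ x₂ y₁ ℓ : K) :
    (Wab a b).toAffine.addY x₁ x₂ y₁ ℓ = -(ℓ * (ℓ ^ 2 - a - 2 * x₁ - x₂) + y₁) := by
  rw [Affine.addY, Affine.negAddY, addX_eq, negY_eq]
  ring

theorem two_nsmul_some_f_ef [DecidableEq K] {e f : K} (h2 : (2 : K) ≠ 0) (he : e ≠ 0)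
    (hf : f ≠ 0) (hQ : (Wab (e ^ 2 - 2 * f) (f ^ 2)).toAffine.Nonsingular f (e * f))
    (h0 : (Wab (e ^ 2 - 2 * f) (f ^ 2)).toAffine.Nonsingular 0 0) :
    2 • Affine.Point.some _ _ hQ = Affine.Point.some _ _ h0 := by
  have h2y : 2 * (e * f) ≠ 0 := mul_ne_zero h2 (mul_ne_zero he hf)
  have hslope : (Wab (e ^ 2 - 2 * f) (f ^ 2)).toAffine.slope f f (e * f) (e * f) = e := by
    rw [slope_self _ _ _ _ h2y, div_eq_iff h2y]
    ring
  rw [two_nsmul, Affine.Point.add_self_of_Y_ne (Y_ne_negY h2y), Affine.Point.some.injEq,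
    addX_eq, addY_eq, hslope]
  constructor <;> ring

end Wab

open Classical in
theorem stmt1_general {K : Type*} [Field K] (h2 : (2 : K) ≠ 0)
    (e f : K) (he : e ≠ 0) (hf : f ≠ 0) (hef : e ^ 2 ≠ 4 * f) :
    (Wab (e ^ 2 - 2 * f) (f ^ 2)).Δ ≠ 0 ∧
    (Wab (e ^ 2 - 2 * f) (f ^ 2)).toAffine.Equation f (e * f) ∧
    ∃ (hQ : (Wab (e ^ 2 - 2 * f) (f ^ 2)).toAffine.Nonsingular f (e * f))
      (h0 : (Wab (e ^ 2 - 2 * f) (f ^ 2)).toAffine.Nonsingular 0 0),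
        2 • (Affine.Point.some _ _ hQ) = Affine.Point.some _ _ h0 ∧
        addOrderOf (Affine.Point.some _ _ hQ) = 4 := by
  have hΔ : (Wab (e ^ 2 - 2 * f) (f ^ 2)).Δ ≠ 0 :=
    Wab.Δ_ne_zero h2 (pow_ne_zero 2 hf) fun h ↦
      (mul_ne_zero (pow_ne_zero 2 he) (sub_ne_zero.mpr hef)) (by linear_combination h)
  have hQ : (Wab (e ^ 2 - 2 * f) (f ^ 2)).toAffine.Equation f (e * f) :=
    (Wab.equation_iff ..).mpr (by ring)
  have h0 : (Wab (e ^ 2 - 2 * f) (f ^ 2)).toAffine.Equation 0 0 :=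
    (Wab.equation_iff ..).mpr (by ring)
  have hQ' := (Affine.equation_iff_nonsingular_of_Δ_ne_zero hΔ).mp hQ
  have h0' := (Affine.equation_iff_nonsingular_of_Δ_ne_zero hΔ).mp h0
  have hdouble := Wab.two_nsmul_some_f_ef h2 he hf hQ' h0'
  exact ⟨hΔ, hQ, hQ', h0', hdouble, addOrderOf_eq_four_of_two_nsmul hdouble
    (Affine.Point.some_ne_zero h0') (Wab.two_nsmul_some_zero_zero h0')⟩

open Classical in
/-- Let `K` be a field with `char K ∉ {2,3}` and `e, f ∈ K` with `e ≠ 0`,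
`f ≠ 0`, `e² ≠ 4f`.  Then the Weierstrass curve `E_{e,f} : y² = x(x² + (e²−2f)x + f²)` has
nonzero discriminant, the point `Q = (f, ef)` lies on it, `2Q = (0,0)`, and `Q` has exact
order `4` in `E_{e,f}(K)`. -/
theorem stmt1 {K : Type*} [Field K] (h2 : (2 : K) ≠ 0) (h3 : (3 : K) ≠ 0)
    (e f : K) (he : e ≠ 0) (hf : f ≠ 0) (hef : e ^ 2 ≠ 4 * f) :
    (Wab (e ^ 2 - 2 * f) (f ^ 2)).Δ ≠ 0 ∧
    (Wab (e ^ 2 - 2 * f) (f ^ 2)).toAffine.Equation f (e * f) ∧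
    ∃ (hQ : (Wab (e ^ 2 - 2 * f) (f ^ 2)).toAffine.Nonsingular f (e * f))
      (h0 : (Wab (e ^ 2 - 2 * f) (f ^ 2)).toAffine.Nonsingular 0 0),
        2 • (Affine.Point.some _ _ hQ) = Affine.Point.some _ _ h0 ∧
        addOrderOf (Affine.Point.some _ _ hQ) = 4 :=
  stmt1_general h2 e f he hf hef
end

section
/- Let K be a field with char K ∉ {2,3} containing an element i with i² = −1, and let e, f ∈ K satisfy e ≠ 0, f ≠ 0 and e² ≠ 4f. Then the Weierstrass curve E': y² = x(x² − 2(e²+4f)x + (e²−4f)²) over K has nonzero discriminant (so is an elliptic curve), and the point (4f − e², 2ie(4f − e²)) lies on E' and has exact order 4 in E'(K). Equivalently, E' coincides with the curve E_{e',f'}: y² = x(x² + (e'²−2f')x + f'²) for e' = 2ie and f' = 4f − e². -/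
open WeierstrassCurve

/-!
The curve `E'` is, after the substitution `i² = -1`, literally the curve `E_{e',f'}` with
`e' = 2ie` and `f' = 4f - e²`, and `(4f - e², 2ie(4f - e²))` is its point `(f', e'f')`.
On any `E_{e,f}` the tangent at `Q = (f, ef)` has slope `e` and meets the curve again at the
`2`-torsion point `(0, 0)`, so `2Q = (0, 0) ≠ O` and `4Q = O`.
-/

section

variable {K : Type*} [Field K]

lemma Wab_Δ (a b : K) : (Wab a b).Δ = 16 * b ^ 2 * (a ^ 2 - 4 * b) := by
  simp only [Wab, Δ, b₂, b₄, b₆, b₈]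
  ring

lemma Wab_nonsingular_zero {a b : K} (hb : b ≠ 0) : (Wab a b).toAffine.Nonsingular 0 0 :=
  Affine.nonsingular_zero.2 ⟨rfl, Or.inr hb⟩

lemma Wab_some_zero_add_self [DecidableEq K] {a b : K} (h : (Wab a b).toAffine.Nonsingular 0 0) :
    Affine.Point.some 0 0 h + Affine.Point.some 0 0 h = 0 :=
  Affine.Point.add_self_of_Y_eq (by simp [Wab, Affine.negY])

def curveEF (e f : K) : WeierstrassCurve K :=
  Wab (e ^ 2 - 2 * f) (f ^ 2)

namespace curveEF

variable {e f : K}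

lemma Δ_eq (e f : K) : (curveEF e f).Δ = 16 * e ^ 2 * f ^ 4 * (e ^ 2 - 4 * f) := by
  rw [curveEF, Wab_Δ]
  ring

lemma Δ_ne_zero (h2 : (2 : K) ≠ 0) (he : e ≠ 0) (hf : f ≠ 0) (hef : e ^ 2 ≠ 4 * f) :
    (curveEF e f).Δ ≠ 0 := by
  have h16 : (16 : K) ≠ 0 := by
    simpa [show (16 : K) = 2 ^ 4 by norm_num] using h2
  rw [Δ_eq]
  exact mul_ne_zero (by positivity) (sub_ne_zero.2 hef)

lemma nonsingular_Q (h2 : (2 : K) ≠ 0) (he : e ≠ 0) (hf : f ≠ 0) (hef : e ^ 2 ≠ 4 * f) :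
    (curveEF e f).toAffine.Nonsingular f (e * f) := by
  refine (Affine.equation_iff_nonsingular_of_Δ_ne_zero (Δ_ne_zero h2 he hf hef)).1 ?_
  rw [Affine.equation_iff]
  simp only [curveEF, Wab]
  ring

lemma nonsingular_zero (hf : f ≠ 0) : (curveEF e f).toAffine.Nonsingular 0 0 :=
  Wab_nonsingular_zero (pow_ne_zero 2 hf)

lemma Q_ne_negY (h2 : (2 : K) ≠ 0) (he : e ≠ 0) (hf : f ≠ 0) :
    e * f ≠ (curveEF e f).toAffine.negY f (e * f) := by
  simp only [curveEF, Wab, Affine.negY]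
  intro h
  exact mul_ne_zero h2 (mul_ne_zero he hf) (by linear_combination h)

variable [DecidableEq K]

lemma slope_Q (h2 : (2 : K) ≠ 0) (he : e ≠ 0) (hf : f ≠ 0) :
    (curveEF e f).toAffine.slope f f (e * f) (e * f) = e := by
  rw [Affine.slope_of_Y_ne rfl (Q_ne_negY h2 he hf), div_eq_iff]
  · simp only [curveEF, Wab, Affine.negY]
    ring
  · exact sub_ne_zero.2 (Q_ne_negY h2 he hf)

lemma Q_add_self (h2 : (2 : K) ≠ 0) (he : e ≠ 0) (hf : f ≠ 0)
    (hQ : (curveEF e f).toAffine.Nonsingular f (e * f)) :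
    Affine.Point.some f (e * f) hQ + Affine.Point.some f (e * f) hQ =
      Affine.Point.some 0 0 (nonsingular_zero hf) := by
  rw [Affine.Point.add_self_of_Y_ne (Q_ne_negY h2 he hf), Affine.Point.some.injEq,
    slope_Q h2 he hf]
  constructor
  · simp only [curveEF, Wab, Affine.addX]
    ring
  · simp only [curveEF, Wab, Affine.addY, Affine.negAddY, Affine.negY, Affine.addX]
    ring

lemma addOrderOf_Q (h2 : (2 : K) ≠ 0) (he : e ≠ 0) (hf : f ≠ 0)
    (hQ : (curveEF e f).toAffine.Nonsingular f (e * f)) :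
    addOrderOf (Affine.Point.some f (e * f) hQ) = 4 := by
  have h2Q := Q_add_self h2 he hf hQ
  refine addOrderOf_eq_prime_pow (p := 2) (n := 1) ?_ ?_
  · rw [pow_one, two_nsmul, h2Q]
    exact Affine.Point.some_ne_zero _
  · rw [show 2 ^ (1 + 1) = 2 + 2 from rfl, add_nsmul, two_nsmul, h2Q]
    exact Wab_some_zero_add_self _

end curveEF

end

open Classical in
theorem stmt3_general {K : Type*} [Field K] (h2 : (2 : K) ≠ 0)
    (i : K) (hi : i ^ 2 = -1)
    (e f : K) (he : e ≠ 0) (hf : f ≠ 0) (hef : e ^ 2 ≠ 4 * f) :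
    (Wab (-2 * (e ^ 2 + 4 * f)) ((e ^ 2 - 4 * f) ^ 2)).Δ ≠ 0 ∧
    (∃ hQ : (Wab (-2 * (e ^ 2 + 4 * f)) ((e ^ 2 - 4 * f) ^ 2)).toAffine.Nonsingular
        (4 * f - e ^ 2) (2 * i * e * (4 * f - e ^ 2)),
      addOrderOf (Affine.Point.some _ _ hQ) = 4) ∧
    Wab (-2 * (e ^ 2 + 4 * f)) ((e ^ 2 - 4 * f) ^ 2) =
      Wab ((2 * i * e) ^ 2 - 2 * (4 * f - e ^ 2)) ((4 * f - e ^ 2) ^ 2) := by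
  have hE' : Wab (-2 * (e ^ 2 + 4 * f)) ((e ^ 2 - 4 * f) ^ 2) =
      curveEF (2 * i * e) (4 * f - e ^ 2) := by
    rw [curveEF]
    congr 1
    · linear_combination (-4 * e ^ 2) * hi
    · ring
  have hi0 : i ≠ 0 := by rintro rfl; norm_num at hi
  have he' : 2 * i * e ≠ 0 := mul_ne_zero (mul_ne_zero h2 hi0) he
  have hf' : 4 * f - e ^ 2 ≠ 0 := sub_ne_zero.2 (Ne.symm hef)
  have hef' : (2 * i * e) ^ 2 ≠ 4 * (4 * f - e ^ 2) := by
    intro h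
    exact mul_ne_zero (pow_ne_zero 4 h2) hf (by linear_combination -h + 4 * e ^ 2 * hi)
  rw [hE']
  exact ⟨curveEF.Δ_ne_zero h2 he' hf' hef', ⟨curveEF.nonsingular_Q h2 he' hf' hef',
    curveEF.addOrderOf_Q h2 he' hf' _⟩, rfl⟩

open Classical in
/-- Let `K` be a field with `char K ∉ {2,3}` containing `i` with
`i² = −1`, and let `e, f ∈ K` with `e ≠ 0`, `f ≠ 0`, `e² ≠ 4f`.  Then the curve
`E' : y² = x(x² − 2(e²+4f)x + (e²−4f)²)` has nonzero discriminant, the point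
`(4f−e², 2ie(4f−e²))` lies on `E'` and has exact order `4`; equivalently `E' = E_{e',f'}`
with `e' = 2ie`, `f' = 4f−e²`. -/
theorem stmt3 {K : Type*} [Field K] (h2 : (2 : K) ≠ 0) (h3 : (3 : K) ≠ 0)
    (i : K) (hi : i ^ 2 = -1)
    (e f : K) (he : e ≠ 0) (hf : f ≠ 0) (hef : e ^ 2 ≠ 4 * f) :
    (Wab (-2 * (e ^ 2 + 4 * f)) ((e ^ 2 - 4 * f) ^ 2)).Δ ≠ 0 ∧
    (∃ hQ : (Wab (-2 * (e ^ 2 + 4 * f)) ((e ^ 2 - 4 * f) ^ 2)).toAffine.Nonsingular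
        (4 * f - e ^ 2) (2 * i * e * (4 * f - e ^ 2)),
      addOrderOf (Affine.Point.some _ _ hQ) = 4) ∧
    Wab (-2 * (e ^ 2 + 4 * f)) ((e ^ 2 - 4 * f) ^ 2) =
      Wab ((2 * i * e) ^ 2 - 2 * (4 * f - e ^ 2)) ((4 * f - e ^ 2) ^ 2) :=
  stmt3_general h2 i hi e f he hf hef
end

section
/- Let K be a field, n ≥ 7, ζ ∈ K a primitive n-th root of unity, and A, B ∈ K[τ] polynomials satisfying A(ζτ) = ζ⁴·A(τ) and B(ζτ) = ζ⁶·B(τ). Then τ⁴ divides A and τ⁶ divides B. (Hence the Weierstrass equation y² = x³ + A(τ)x + B(τ) is not minimal, so the automorphism σ_n: (x,y,τ) ↦ (ζ²x, ζ³y, ζτ) can only occur on a minimal elliptic fibration when n ≤ 6.) -/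
/-!
Substituting `ζτ` for `τ` multiplies the coefficient of `τ^d` by `ζ^d`, so the relation
`A(ζτ) = ζ^m A(τ)` kills every coefficient with `ζ^d ≠ ζ^m`. For a primitive `n`-th root of
unity `ζ` and `d < m < n` the powers `ζ^d` and `ζ^m` differ, so `τ^m ∣ A`.
-/

open Polynomial

theorem Polynomial.X_pow_dvd_of_comp_C_mul_X_eq_C_pow_mul {R : Type*} [CommRing R] [IsDomain R]
    {n m : ℕ} {ζ : R} (hζ : IsPrimitiveRoot ζ n) (hm : m < n) {p : R[X]}
    (hp : p.comp (C ζ * X) = C (ζ ^ m) * p) : X ^ m ∣ p := by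
  refine (X_pow_dvd_iff).2 fun d hd => ?_
  have hcoeff : p.coeff d * ζ ^ d = p.coeff d * ζ ^ m := by
    have h := congrArg (coeff · d) hp
    rwa [comp_C_mul_X_coeff, coeff_C_mul, mul_comm (ζ ^ m)] at h
  by_contra hne
  exact hd.ne (hζ.pow_inj (hd.trans hm) hm (mul_left_cancel₀ hne hcoeff))

/-- For a field `K`, `n ≥ 7`, `ζ ∈ K` a primitive `n`-th root of unity, and
polynomials `A, B ∈ K[τ]` with `A(ζτ) = ζ⁴·A(τ)` and `B(ζτ) = ζ⁶·B(τ)`, one has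
`τ⁴ ∣ A` and `τ⁶ ∣ B`; hence the Weierstrass equation `y² = x³ + A(τ)x + B(τ)` is not
minimal, so `σ_n` occurs on a minimal elliptic fibration only when `n ≤ 6`. -/
theorem stmt7 {K : Type*} [Field K] (n : ℕ) (hn : 7 ≤ n) (ζ : K)
    (hζ : IsPrimitiveRoot ζ n) (A B : Polynomial K)
    (hA : A.comp (C ζ * X) = C (ζ ^ 4) * A)
    (hB : B.comp (C ζ * X) = C (ζ ^ 6) * B) :
    X ^ 4 ∣ A ∧ X ^ 6 ∣ B :=
  ⟨X_pow_dvd_of_comp_C_mul_X_eq_C_pow_mul hζ (by omega) hA,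
    X_pow_dvd_of_comp_C_mul_X_eq_C_pow_mul hζ (by omega) hB⟩
end

section
/- Let K be a field, n ≥ 1, and let A, B ∈ K[τ] be polynomials such that every exponent j with nonzero coefficient in A satisfies j ≡ 4 (mod n), and every exponent j with nonzero coefficient in B satisfies j ≡ 6 (mod n). Then there exist polynomials Ã, B̃ ∈ K[T] such that Ã(τ^n) = τ^{4n−4}·A(τ) and B̃(τ^n) = τ^{6n−6}·B(τ) as polynomial identities; consequently, for all x, y, τ ∈ K with τ ≠ 0, one has y² = x³ + A(τ)x + B(τ) if and only if (τ^{3n−3}y)² = (τ^{2n−2}x)³ + Ã(τ^n)·(τ^{2n−2}x) + B̃(τ^n). -/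
/-!
The support conditions say exactly that `τ^{4n-4} A` and `τ^{6n-6} B` only involve powers of
`τⁿ`, so they are `Ã(τⁿ)` and `B̃(τⁿ)` for their contractions `Ã, B̃`. The equivalence is then
the invariance of a Weierstrass equation under `(x, y) ↦ (u²x, u³y)` with `u = τⁿ⁻¹`, which
multiplies the coefficients by `u⁴` and `u⁶`.
-/

open Polynomial

namespace Polynomial

theorem expand_contract_of_dvd {R : Type*} [CommSemiring R] {p : ℕ} (hp : p ≠ 0) {f : R[X]}
    (hf : ∀ j, f.coeff j ≠ 0 → p ∣ j) : expand R p (contract p f) = f := by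
  ext j
  rw [coeff_expand hp.bot_lt, coeff_contract hp]
  split_ifs with h
  · rw [Nat.div_mul_cancel h]
  · exact (not_imp_comm.mp (hf j) h).symm

theorem dvd_of_coeff_X_pow_mul_ne_zero {R : Type*} [Semiring R] {n m k : ℕ} {f : R[X]}
    (hf : ∀ j, f.coeff j ≠ 0 → j ≡ k [MOD n]) (hkm : k + m ≡ 0 [MOD n]) (j : ℕ)
    (hj : (X ^ m * f).coeff j ≠ 0) : n ∣ j := by
  rw [coeff_X_pow_mul'] at hj
  split_ifs at hj with hmj
  · have hshift : j - m + m ≡ k + m [MOD n] := (hf _ hj).add_right m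
    rw [Nat.sub_add_cancel hmj] at hshift
    exact Nat.modEq_zero_iff_dvd.mp (hshift.trans hkm)
  · exact absurd rfl hj

theorem exists_comp_X_pow_eq_X_pow_mul {R : Type*} [CommSemiring R] {n k : ℕ} (hn : 1 ≤ n)
    {f : R[X]} (hf : ∀ j, f.coeff j ≠ 0 → j ≡ k [MOD n]) :
    ∃ g : R[X], g.comp (X ^ n) = X ^ (k * n - k) * f := by
  have hkn : k + (k * n - k) ≡ 0 [MOD n] := by
    rw [Nat.add_sub_cancel' (Nat.le_mul_of_pos_right k hn)]
    exact Nat.modEq_zero_iff_dvd.mpr (dvd_mul_left n k)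
  exact ⟨contract n (X ^ (k * n - k) * f), expand_contract_of_dvd (by omega)
    (dvd_of_coeff_X_pow_mul_ne_zero hf hkn)⟩

end Polynomial

theorem pow_mul_sub_eq_pow_pow_sub_one {M : Type*} [Monoid M] (a : M) (k n : ℕ) :
    a ^ (k * n - k) = (a ^ (n - 1)) ^ k := by
  rw [← pow_mul, Nat.sub_one_mul, mul_comm]

theorem weierstrass_eq_iff_of_rescale {K : Type*} [CommRing K] [IsDomain K] {u : K}
    (hu : u ≠ 0) (x y a b : K) :
    y ^ 2 = x ^ 3 + a * x + b ↔
      (u ^ 3 * y) ^ 2 = (u ^ 2 * x) ^ 3 + u ^ 4 * a * (u ^ 2 * x) + u ^ 6 * b := by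
  have hscale : (u ^ 2 * x) ^ 3 + u ^ 4 * a * (u ^ 2 * x) + u ^ 6 * b =
      u ^ 6 * (x ^ 3 + a * x + b) := by ring
  rw [hscale, mul_pow, ← pow_mul, mul_right_inj' (pow_ne_zero _ hu)]

/-- Let `K` be a field, `n ≥ 1`, and `A, B ∈ K[τ]` supported in degrees
`≡ 4 (mod n)` and `≡ 6 (mod n)` respectively.  Then there are polynomials `Ã, B̃ ∈ K[T]`
with `Ã(τⁿ) = τ^{4n-4}·A(τ)` and `B̃(τⁿ) = τ^{6n-6}·B(τ)`, and consequently for all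
`x, y, τ ∈ K` with `τ ≠ 0`:
`y² = x³ + A(τ)x + B(τ)` iff `(τ^{3n-3}y)² = (τ^{2n-2}x)³ + Ã(τⁿ)·(τ^{2n-2}x) + B̃(τⁿ)`. -/
theorem stmt8 {K : Type*} [Field K] (n : ℕ) (hn : 1 ≤ n) (A B : Polynomial K)
    (hA : ∀ j : ℕ, A.coeff j ≠ 0 → j ≡ 4 [MOD n])
    (hB : ∀ j : ℕ, B.coeff j ≠ 0 → j ≡ 6 [MOD n]) :
    ∃ A' B' : Polynomial K,
      A'.comp (X ^ n) = X ^ (4 * n - 4) * A ∧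
      B'.comp (X ^ n) = X ^ (6 * n - 6) * B ∧
      ∀ x y τ : K, τ ≠ 0 →
        (y ^ 2 = x ^ 3 + A.eval τ * x + B.eval τ ↔
          (τ ^ (3 * n - 3) * y) ^ 2 =
            (τ ^ (2 * n - 2) * x) ^ 3 + A'.eval (τ ^ n) * (τ ^ (2 * n - 2) * x) +
              B'.eval (τ ^ n)) := by
  obtain ⟨A', hA'⟩ := exists_comp_X_pow_eq_X_pow_mul hn hA
  obtain ⟨B', hB'⟩ := exists_comp_X_pow_eq_X_pow_mul hn hB
  refine ⟨A', B', hA', hB', fun x y τ hτ => ?_⟩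
  have hevalA := congrArg (eval τ) hA'
  have hevalB := congrArg (eval τ) hB'
  simp only [eval_comp, eval_mul, eval_pow, eval_X] at hevalA hevalB
  rw [hevalA, hevalB]
  simp only [pow_mul_sub_eq_pow_pow_sub_one]
  exact weierstrass_eq_iff_of_rescale (pow_ne_zero _ hτ) x y _ _
end

section
/- Let A, B ∈ ℂ[τ] and let i ∈ ℂ with i² = −1. The following are equivalent: (1) A(iτ) = A(τ) and B(iτ) = −B(τ) as polynomials, and for all τ₀ ∈ ℂ ∖ {0}, A(τ₀) = τ₀⁸·A(1/τ₀) and B(τ₀) = τ₀¹²·B(1/τ₀); (2) there exist a, b, c, d ∈ ℂ such that A = a·(τ⁸ + 1) + b·τ⁴ and B = c·(τ¹⁰ + τ²) + d·τ⁶. -/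
/-!
Invariance under `τ ↦ iτ` multiplies the `n`-th coefficient by `iⁿ`, and `i` has order `4`, so `A`
only has monomials of degree `≡ 0` and `B` of degree `≡ 2 (mod 4)`. The reciprocity
`p(τ) = τᵏ p(1/τ)` on `ℂˣ` says that `p` agrees with its reflection `reflect k p` once
`deg p ≤ k`; that bound comes from comparing degrees in `reflect (deg p + k) p = X ^ deg p * p`.
So the coefficients satisfy `coeff (k - n) = coeff n` and vanish above `k`, which leaves exactly
the stated families.
-/

open Polynomial

lemma orderOf_eq_four_of_sq_eq_neg_one {R : Type*} [CommRing R] [NeZero (2 : R)] {i : R}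
    (hi : i ^ 2 = -1) : orderOf i = 4 := by
  have hne : (-1 : R) ≠ 1 := fun h => two_ne_zero (α := R) (by linear_combination -h)
  refine orderOf_eq_prime_pow (p := 2) (n := 1) ?_ ?_
  · simpa [hi] using hne
  · rw [show 2 ^ (1 + 1) = 2 * 2 from rfl, pow_mul, hi, neg_one_sq]

namespace Polynomial

lemma coeff_eq_zero_of_comp_C_mul_X_eq_pow_smul {R : Type*} [CommRing R] [NoZeroDivisors R]
    {p : R[X]} {ζ : R} (hζ : IsOfFinOrder ζ) {k n : ℕ} (h : p.comp (C ζ * X) = ζ ^ k • p)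
    (hn : ¬ n ≡ k [MOD orderOf ζ]) : p.coeff n = 0 := by
  have hcoeff : p.coeff n * ζ ^ n = ζ ^ k * p.coeff n := by
    simpa using congrArg (coeff · n) h
  have hne : ζ ^ n - ζ ^ k ≠ 0 := sub_ne_zero.2 (mt hζ.pow_eq_pow_iff_modEq.1 hn)
  have hmul : (ζ ^ n - ζ ^ k) * p.coeff n = 0 := by linear_combination hcoeff
  exact (mul_eq_zero.1 hmul).resolve_left hne

variable {K : Type*} [Field K] {p q : K[X]} {k : ℕ}

lemma eq_of_eval_eq_of_ne_zero [Infinite K] (h : ∀ x ≠ 0, p.eval x = q.eval x) : p = q :=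
  eq_of_infinite_eval_eq p q ((Set.finite_singleton 0).infinite_compl.mono h)

lemma eval_reflect_eq_pow_mul_eval_inv (hp : p.natDegree ≤ k) {x : K} (hx : x ≠ 0) :
    (reflect k p).eval x = x ^ k * p.eval x⁻¹ := by
  let := invertibleOfNonzero (inv_ne_zero hx)
  have h := eval₂_reflect_mul_pow (RingHom.id K) x⁻¹ k p hp
  rw [invOf_eq_inv, inv_inv, eval₂_id, eval₂_id] at h
  rw [← h, inv_pow]
  field_simp

section Reciprocal

variable [Infinite K] (h : ∀ x ≠ 0, p.eval x = x ^ k * p.eval x⁻¹)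
include h

lemma natDegree_le_of_eval_eq_pow_mul_eval_inv : p.natDegree ≤ k := by
  rcases eq_or_ne p 0 with rfl | hp
  · simp
  have hrefl : reflect (p.natDegree + k) p = X ^ p.natDegree * p :=
    eq_of_eval_eq_of_ne_zero fun x hx => by
      rw [eval_reflect_eq_pow_mul_eval_inv le_self_add hx, pow_add, mul_assoc, ← h x hx]
      simp
  have hdeg := natDegree_reflect_le (N := p.natDegree + k) (p := p)
  rw [hrefl, natDegree_X_pow_mul _ hp] at hdeg
  omega

lemma reflect_eq_self_of_eval_eq_pow_mul_eval_inv : reflect k p = p :=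
  eq_of_eval_eq_of_ne_zero fun x hx => by
    rw [eval_reflect_eq_pow_mul_eval_inv (natDegree_le_of_eval_eq_pow_mul_eval_inv h) hx, h x hx]

lemma coeff_sub_eq_of_eval_eq_pow_mul_eval_inv {n : ℕ} (hn : n ≤ k) :
    p.coeff (k - n) = p.coeff n := by
  rw [← revAt_le hn, ← coeff_reflect, reflect_eq_self_of_eval_eq_pow_mul_eval_inv h]

end Reciprocal

end Polynomial

section SquareRootOfNegOne

variable {K : Type*} [Field K] [Infinite K] [NeZero (2 : K)] {i : K} (hi : i ^ 2 = -1)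
include hi

lemma eq_of_comp_C_mul_X_eq_self_of_eval_eq_pow_eight_mul_eval_inv {A : K[X]}
    (hA : A.comp (C i * X) = A) (hAe : ∀ x ≠ 0, A.eval x = x ^ 8 * A.eval x⁻¹) :
    A = C (A.coeff 0) * (X ^ 8 + 1) + C (A.coeff 4) * X ^ 4 := by
  have hord := orderOf_eq_four_of_sq_eq_neg_one hi
  have hA0 (n : ℕ) (hn : ¬ n ≡ 0 [MOD 4]) : A.coeff n = 0 :=
    coeff_eq_zero_of_comp_C_mul_X_eq_pow_smul (orderOf_pos_iff.1 (by omega))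
      (by rwa [pow_zero, one_smul]) (hord ▸ hn)
  have hA8 := coeff_sub_eq_of_eval_eq_pow_mul_eval_inv hAe (n := 0) (by norm_num)
  ext n
  rcases le_or_gt n 8 with hn | hn
  · interval_cases n <;> simp [hA0, hA8, Nat.ModEq, coeff_X_pow, coeff_one]
  · simp [coeff_eq_zero_of_natDegree_lt
      ((natDegree_le_of_eval_eq_pow_mul_eval_inv hAe).trans_lt hn), coeff_X_pow, coeff_one,
      show n ≠ 0 ∧ n ≠ 4 ∧ n ≠ 8 by omega]

lemma eq_of_comp_C_mul_X_eq_neg_of_eval_eq_pow_twelve_mul_eval_inv {B : K[X]}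
    (hB : B.comp (C i * X) = -B) (hBe : ∀ x ≠ 0, B.eval x = x ^ 12 * B.eval x⁻¹) :
    B = C (B.coeff 2) * (X ^ 10 + X ^ 2) + C (B.coeff 6) * X ^ 6 := by
  have hord := orderOf_eq_four_of_sq_eq_neg_one hi
  have hB0 (n : ℕ) (hn : ¬ n ≡ 2 [MOD 4]) : B.coeff n = 0 :=
    coeff_eq_zero_of_comp_C_mul_X_eq_pow_smul (orderOf_pos_iff.1 (by omega))
      (by rwa [hi, neg_one_smul]) (hord ▸ hn)
  have hB10 := coeff_sub_eq_of_eval_eq_pow_mul_eval_inv hBe (n := 2) (by norm_num)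
  ext n
  rcases le_or_gt n 12 with hn | hn
  · interval_cases n <;> simp [hB0, hB10, Nat.ModEq, coeff_X_pow]
  · simp [coeff_eq_zero_of_natDegree_lt
      ((natDegree_le_of_eval_eq_pow_mul_eval_inv hBe).trans_lt hn), coeff_X_pow,
      show n ≠ 2 ∧ n ≠ 6 ∧ n ≠ 10 by omega]

end SquareRootOfNegOne

/-- For `A, B ∈ ℂ[τ]` and `i ∈ ℂ` with `i² = −1`, the following are
equivalent: (1) `A(iτ) = A(τ)`, `B(iτ) = −B(τ)` as polynomials, and for all `τ₀ ≠ 0`,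
`A(τ₀) = τ₀⁸·A(1/τ₀)` and `B(τ₀) = τ₀¹²·B(1/τ₀)`; (2) there exist `a, b, c, d ∈ ℂ` with
`A = a(τ⁸+1) + bτ⁴` and `B = c(τ¹⁰+τ²) + dτ⁶`. -/
theorem stmt13 (A B : Polynomial ℂ) (i : ℂ) (hi : i ^ 2 = -1) :
    (A.comp (C i * X) = A ∧ B.comp (C i * X) = -B ∧
      (∀ τ : ℂ, τ ≠ 0 → A.eval τ = τ ^ 8 * A.eval τ⁻¹) ∧
      (∀ τ : ℂ, τ ≠ 0 → B.eval τ = τ ^ 12 * B.eval τ⁻¹)) ↔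
    (∃ a b c d : ℂ, A = C a * (X ^ 8 + 1) + C b * X ^ 4 ∧
      B = C c * (X ^ 10 + X ^ 2) + C d * X ^ 6) := by
  constructor
  · rintro ⟨hA, hB, hAe, hBe⟩
    exact ⟨_, _, _, _, eq_of_comp_C_mul_X_eq_self_of_eval_eq_pow_eight_mul_eval_inv hi hA hAe,
      eq_of_comp_C_mul_X_eq_neg_of_eval_eq_pow_twelve_mul_eval_inv hi hB hBe⟩
  · rintro ⟨a, b, c, d, rfl, rfl⟩
    have hpow (n : ℕ) : i ^ n = i ^ (n % 4) := by
      rw [← orderOf_eq_four_of_sq_eq_neg_one hi, pow_mod_orderOf]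
    refine ⟨?_, ?_, fun τ hτ => ?_, fun τ hτ => ?_⟩
    · simp [mul_pow, ← C_pow, hpow 4, hpow 8]
    · simp [mul_pow, ← C_pow, hpow 6, hpow 10, hi]
      ring
    · simp only [eval_add, eval_mul, eval_pow, eval_C, eval_X, eval_one]
      field_simp
      ring
    · simp only [eval_add, eval_mul, eval_pow, eval_C, eval_X]
      field_simp
      ring
end
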